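/- Fix μ ∈ ℝ, D > 0, V ∈ ℝ with μV ≠ 0, V_x ∈ ℝ, and α ∈ [0,1]. For h > 0 set Pe(h) = (μ/D)V·h, Q(h) = (μ/D)V_x·h²/2, Pe⁺(h) = Pe(h) − αQ(h) and P(h) = Pe(h)/2 − αQ(h)/4. Then the function h ↦ [((1 + Pe⁺(h)/2)·(1 + αQ(h))·exp(−Pe(h)) − (1 − αQ(h)/2)·exp(−P(h)))/(Pe⁺(h)·((1 + αQ(h))·exp(−Pe(h)) − 1))] / W̃(Pe⁺(h), −3αQ(h)/4) tends to 1 as h → 0 from the right, where W̃(z,q) = (exp(z/2 + q) − 1 − z/2)/(z·(exp(z) − 1)) for z ≠ 0. -/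

import Mathlib

/-- `W̃(z,q) = (exp(z/2 + q) − 1 − z/2) / (z (exp z − 1))` (for `z ≠ 0`). -/
noncomputable def Wtilde (z q : ℝ) : ℝ :=
  (Real.exp (z / 2 + q) - 1 - z / 2) / (z * (Real.exp z - 1))

/-!
Write `Pe(h) = c h` and `α Q(h) = s h²`. Both denominators are divisible by `Pe⁺ = c h - s h²`,
and after that factor they vanish to first order with slopes `-c` and `c`, so their ratio
tends to `-1`. For the numerators, Taylor expansion of the three exponentials to third order
shows that the flux numerator `N` equals `-(1 - c h)` times the numerator `M` of `W̃` up to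
`O(h⁴)`, while `M = (c²/8 - 3s/4) h² + (c³/48 - 5cs/8) h³ + O(h⁴)` with coefficients that
cannot both vanish when `c ≠ 0`. Hence `N / M → -1` as well, and the quotient tends to `1`.
-/

open Filter Asymptotics Topology Real

section Asymptotics

variable {𝕜 : Type*} [NormedField 𝕜]

theorem isBigO_mul_of_continuousAt {α : Type*} [TopologicalSpace α] {p f g : α → 𝕜} {x : α}
    (hp : ContinuousAt p x) (hf : f =O[𝓝 x] g) : (fun y => p y * f y) =O[𝓝 x] g := by
  simpa using (hp.tendsto.isBigO_one 𝕜).mul hf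

theorem tendsto_div_of_sub_mul_isLittleO {α : Type*} {l : Filter α} {f g u : α → 𝕜} {L : 𝕜}
    (hg : ∀ᶠ x in l, g x ≠ 0) (hu : Tendsto u l (𝓝 L))
    (h : (fun x => f x - u x * g x) =o[l] g) : Tendsto (fun x => f x / g x) l (𝓝 L) := by
  have hlim := h.tendsto_div_nhds_zero.add hu
  rw [zero_add] at hlim
  refine hlim.congr' ?_
  filter_upwards [hg] with x hx
  field_simp
  ring

theorem isBigO_pow_of_sub_isBigO {f : 𝕜 → 𝕜} {a : 𝕜} {n : ℕ} (ha : a ≠ 0)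
    (hf : (fun x => f x - a * x ^ n) =O[𝓝 0] (· ^ (n + 1))) : (· ^ n) =O[𝓝 0] f := by
  have hequiv : f ~[𝓝 0] fun x => a * x ^ n :=
    hf.trans_isLittleO ((isLittleO_pow_pow n.lt_succ_self).trans_isBigO
      (isBigO_self_const_mul ha _ _))
  exact (isBigO_self_const_mul ha _ _).trans hequiv.symm.isBigO

theorem pow_four_isLittleO_of_sub_isBigO {f : 𝕜 → 𝕜} {a b : 𝕜} (hab : a ≠ 0 ∨ b ≠ 0)
    (hf : (fun x => f x - (a * x ^ 2 + b * x ^ 3)) =O[𝓝 0] (· ^ 4)) : (· ^ 4) =o[𝓝 0] f := by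
  by_cases ha : a = 0
  · subst ha
    have h4 : (fun x => f x - b * x ^ 3) =O[𝓝 0] (· ^ (3 + 1)) :=
      hf.congr_left fun x => by ring
    exact (isLittleO_pow_pow (by norm_num)).trans_isBigO
      (isBigO_pow_of_sub_isBigO (hab.resolve_left (not_not.2 rfl)) h4)
  · have h3 : (fun x => f x - a * x ^ 2) =O[𝓝 0] (· ^ (2 + 1)) :=
      ((hf.trans (isLittleO_pow_pow (by norm_num)).isBigO).add
        (isBigO_const_mul_self b _ _)).congr_left fun x => by ring
    exact (isLittleO_pow_pow (by norm_num)).trans_isBigO (isBigO_pow_of_sub_isBigO ha h3)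

end Asymptotics

theorem tendsto_div_self_of_hasDerivAt {𝕜 : Type*} [NontriviallyNormedField 𝕜] {f : 𝕜 → 𝕜}
    {f' : 𝕜} (hf : HasDerivAt f f' 0) (h0 : f 0 = 0) :
    Tendsto (fun x => f x / x) (𝓝[≠] 0) (𝓝 f') := by
  simpa [h0, div_eq_inv_mul] using hf.tendsto_slope_zero

theorem exp_linear_add_quadratic_sub_taylor_isBigO (a b : ℝ) :
    (fun h : ℝ => exp (a * h + b * h ^ 2) -
      (1 + a * h + (b + a ^ 2 / 2) * h ^ 2 + (a * b + a ^ 3 / 6) * h ^ 3)) =O[𝓝 0] (· ^ 4) := by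
  have hu : Tendsto (fun h : ℝ => a * h + b * h ^ 2) (𝓝 0) (𝓝 0) :=
    (by fun_prop : Continuous fun h : ℝ => a * h + b * h ^ 2).tendsto' 0 0 (by simp)
  have hexp := (exp_sub_sum_range_isBigO_pow 4).comp_tendsto hu
  have hlin : (fun h : ℝ => a * h + b * h ^ 2) =O[𝓝 0] id :=
    (isBigO_mul_of_continuousAt (p := fun h => a + b * h) (by fun_prop) (isBigO_refl id _))
      |>.congr_left fun h => by simp only [id]; ring
  have htail := isBigO_mul_of_continuousAt
    (p := fun h : ℝ => b ^ 2 / 2 + a ^ 2 * b / 2 + a * b ^ 2 / 2 * h + b ^ 3 / 6 * h ^ 2)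
    (by fun_prop) (isBigO_refl (fun h : ℝ => h ^ 4) (𝓝 0))
  refine ((hexp.trans (hlin.pow 4)).add htail).congr_left fun h => ?_
  simp only [Function.comp_apply, Finset.sum_range_succ, Finset.sum_range_zero, Nat.factorial]
  push_cast
  ring

section FluxCoefficient

variable (c s : ℝ)

noncomputable def fluxNumerator (h : ℝ) : ℝ :=
  (1 + (c * h - s * h ^ 2) / 2) * (1 + s * h ^ 2) * exp (-(c * h)) -
    (1 - s * h ^ 2 / 2) * exp (-(c * h / 2 - s * h ^ 2 / 4))

noncomputable def wNumerator (h : ℝ) : ℝ :=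
  exp ((c * h - s * h ^ 2) / 2 + -(3 * (s * h ^ 2)) / 4) - 1 - (c * h - s * h ^ 2) / 2

noncomputable def fluxDenominator (h : ℝ) : ℝ :=
  (c * h - s * h ^ 2) * ((1 + s * h ^ 2) * exp (-(c * h)) - 1)

noncomputable def wDenominator (h : ℝ) : ℝ :=
  (c * h - s * h ^ 2) * (exp (c * h - s * h ^ 2) - 1)

theorem wNumerator_sub_isBigO :
    (fun h => wNumerator c s h -
      ((c ^ 2 / 8 - 3 * s / 4) * h ^ 2 + (c ^ 3 / 48 - 5 * c * s / 8) * h ^ 3))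
      =O[𝓝 0] (· ^ 4) :=
  (exp_linear_add_quadratic_sub_taylor_isBigO (c / 2) (-(5 * s) / 4)).congr_left fun h => by
    simp only [wNumerator]
    ring_nf

theorem fluxNumerator_add_isBigO :
    (fun h => fluxNumerator c s h + (1 - c * h) * wNumerator c s h) =O[𝓝 0] (· ^ 4) := by
  have e₁ := isBigO_mul_of_continuousAt
    (p := fun h => (1 + (c * h - s * h ^ 2) / 2) * (1 + s * h ^ 2)) (by fun_prop)
    (exp_linear_add_quadratic_sub_taylor_isBigO (-c) 0)
  have e₂ := isBigO_mul_of_continuousAt (p := fun h => 1 - s * h ^ 2 / 2) (by fun_prop)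
    (exp_linear_add_quadratic_sub_taylor_isBigO (-(c / 2)) (s / 4))
  have e₃ := isBigO_mul_of_continuousAt (p := fun h => 1 - c * h) (by fun_prop)
    (exp_linear_add_quadratic_sub_taylor_isBigO (c / 2) (-(5 * s) / 4))
  -- the terms of degree `≥ 4` of the combined cubic Taylor polynomials, divided by `h⁴`
  have htail := isBigO_mul_of_continuousAt
    (p := fun h => -3 / 8 * s ^ 2 + 7 / 16 * c ^ 2 * s - 5 / 48 * c ^ 4
      + (7 / 16 * c * s ^ 2 + 5 / 32 * c ^ 3 * s) * h
      - (1 / 4 * c ^ 2 * s ^ 2 + 1 / 12 * c ^ 4 * s) * h ^ 2 + 1 / 12 * c ^ 3 * s ^ 2 * h ^ 3)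
    (by fun_prop) (isBigO_refl (fun h : ℝ => h ^ 4) (𝓝 0))
  refine (((e₁.sub e₂).add e₃).add htail).congr_left fun h => ?_
  simp only [fluxNumerator, wNumerator]
  ring_nf

theorem tendsto_fluxNumerator_div_wNumerator (hc : c ≠ 0) :
    Tendsto (fun h => fluxNumerator c s h / wNumerator c s h) (𝓝[≠] 0) (𝓝 (-1)) := by
  have hcoeff : c ^ 2 / 8 - 3 * s / 4 ≠ 0 ∨ c ^ 3 / 48 - 5 * c * s / 8 ≠ 0 := by
    refine or_iff_not_imp_left.2 fun hA hB => hc ?_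
    have hs : s = c ^ 2 / 6 := by linarith [not_not.1 hA]
    subst hs
    exact (pow_eq_zero_iff three_ne_zero).1 (by linarith)
  have hM := pow_four_isLittleO_of_sub_isBigO hcoeff (wNumerator_sub_isBigO c s)
  have hMne : ∀ᶠ h in 𝓝[≠] 0, wNumerator c s h ≠ 0 := by
    filter_upwards [nhdsWithin_le_nhds hM.isBigO.eq_zero_imp, self_mem_nhdsWithin]
      with h himp (hh : h ≠ 0)
    exact fun hzero => pow_ne_zero 4 hh (himp hzero)
  have hu : Tendsto (fun h => c * h - 1) (𝓝[≠] 0) (𝓝 (-1)) :=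
    tendsto_nhdsWithin_of_tendsto_nhds
      ((by fun_prop : Continuous fun h : ℝ => c * h - 1).tendsto' 0 (-1) (by simp))
  refine tendsto_div_of_sub_mul_isLittleO hMne hu ?_
  exact (((fluxNumerator_add_isBigO c s).trans_isLittleO hM).mono nhdsWithin_le_nhds).congr_left
    fun h => by ring

theorem tendsto_wDenominator_div_fluxDenominator (hc : c ≠ 0) :
    Tendsto (fun h => wDenominator c s h / fluxDenominator c s h) (𝓝[≠] 0) (𝓝 (-1)) := by
  have hp : HasDerivAt (fun h => c * h - s * h ^ 2) c 0 := by
    simpa using ((hasDerivAt_id' (0 : ℝ)).const_mul c).fun_sub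
      ((hasDerivAt_pow 2 (0 : ℝ)).const_mul s)
  have hY : HasDerivAt (fun h => exp (c * h - s * h ^ 2) - 1) c 0 := by
    simpa using hp.exp.sub_const 1
  have hX : HasDerivAt (fun h => (1 + s * h ^ 2) * exp (-(c * h)) - 1) (-c) 0 := by
    simpa using ((((hasDerivAt_pow 2 (0 : ℝ)).const_mul s).const_add 1).fun_mul
      ((hasDerivAt_id' (0 : ℝ)).const_mul c).neg.exp).sub_const 1
  have hlim := ((tendsto_div_self_of_hasDerivAt hp (by simp)).mul
    (tendsto_div_self_of_hasDerivAt hY (by simp))).div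
    ((tendsto_div_self_of_hasDerivAt hp (by simp)).mul
      (tendsto_div_self_of_hasDerivAt hX (by simp))) (by simpa using hc)
  rw [mul_neg, div_neg, div_self (mul_self_ne_zero.2 hc)] at hlim
  refine hlim.congr' ?_
  filter_upwards [self_mem_nhdsWithin] with h (hh : h ≠ 0)
  simp only [Pi.div_apply, wDenominator, fluxDenominator]
  rw [div_mul_div_comm, div_mul_div_comm, div_div_div_cancel_right₀ (mul_ne_zero hh hh)]

end FluxCoefficient

theorem asymptotic_sjp1_coefficient_plus_general (μ D V Vx α : ℝ)
    (hD : D > 0) (hμV : μ * V ≠ 0) :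
    Filter.Tendsto
      (fun h : ℝ =>
        let Pe := (μ / D) * V * h
        let Q := (μ / D) * Vx * h ^ 2 / 2
        let Pep := Pe - α * Q
        let P := Pe / 2 - α * Q / 4
        (((1 + Pep / 2) * (1 + α * Q) * Real.exp (-Pe) -
            (1 - α * Q / 2) * Real.exp (-P)) /
          (Pep * ((1 + α * Q) * Real.exp (-Pe) - 1))) /
          Wtilde Pep (-(3 * (α * Q)) / 4))
      (nhdsWithin 0 (Set.Ioi 0)) (nhds 1) := by
  have hc : μ / D * V ≠ 0 := by
    rw [div_mul_eq_mul_div]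
    exact div_ne_zero hμV hD.ne'
  have hlim := ((tendsto_fluxNumerator_div_wNumerator _ (α * (μ / D * Vx) / 2) hc).mul
    (tendsto_wDenominator_div_fluxDenominator _ (α * (μ / D * Vx) / 2) hc)).mono_left
      (nhdsWithin_mono _ fun h (hh : 0 < h) => hh.ne')
  rw [neg_one_mul, neg_neg] at hlim
  refine hlim.congr fun h => ?_
  simp only [fluxNumerator, wNumerator, fluxDenominator, wDenominator, Wtilde]
  rw [show α * (μ / D * Vx * h ^ 2 / 2) = α * (μ / D * Vx) / 2 * h ^ 2 by ring]
  simp only [div_eq_mul_inv, mul_inv, inv_inv]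
  ring

theorem asymptotic_sjp1_coefficient_plus (μ D V Vx α : ℝ)
    (hD : D > 0) (hμV : μ * V ≠ 0) (hα : α ∈ Set.Icc (0:ℝ) 1) :
    Filter.Tendsto
      (fun h : ℝ =>
        let Pe := (μ / D) * V * h
        let Q := (μ / D) * Vx * h ^ 2 / 2
        let Pep := Pe - α * Q
        let P := Pe / 2 - α * Q / 4
        (((1 + Pep / 2) * (1 + α * Q) * Real.exp (-Pe) -
            (1 - α * Q / 2) * Real.exp (-P)) /
          (Pep * ((1 + α * Q) * Real.exp (-Pe) - 1))) /
          Wtilde Pep (-(3 * (α * Q)) / 4))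
      (nhdsWithin 0 (Set.Ioi 0)) (nhds 1) :=
  asymptotic_sjp1_coefficient_plus_general μ D V Vx α hD hμV
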